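/- Let x, y : ℝ → ℝ be differentiable functions satisfying the system x′(t) = −2·x(t)·(3x(t) − y(t))·(x(t) + y(t)) and y′(t) = 2·y(t)·(x(t) − 3y(t))·(x(t) + y(t)). Then for all t: d/dt [ (x(t) + y(t))² ] = −2·(x(t) + y(t))²·( 6x(t)² − 4x(t)y(t) + 6y(t)² ) ≤ 0. In particular V(x,y) = (x+y)² is a Lyapunov function for the system. -/

import Mathlib

/-!
Along the flow, `(x + y)′ = -(x + y) · Q(x, y)` with `Q(x, y) = 6x² - 4xy + 6y²`, so
`((x + y)²)′ = -2 (x + y)² Q(x, y)`; and `Q = 2(x - y)² + 4x² + 4y²` is positive semidefinite.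
-/

lemma six_sq_sub_four_mul_add_six_sq_nonneg (a b : ℝ) :
    0 ≤ 6 * a ^ 2 - 4 * a * b + 6 * b ^ 2 := by
  nlinarith [sq_nonneg (a - b), sq_nonneg a, sq_nonneg b]

lemma planar_bracket_field_add (a b : ℝ) :
    -2 * a * (3 * a - b) * (a + b) + 2 * b * (a - 3 * b) * (a + b) =
      -(a + b) * (6 * a ^ 2 - 4 * a * b + 6 * b ^ 2) := by
  ring

theorem lyapunov_planar_bracket_flow (x y : ℝ → ℝ)
    (hx : ∀ t, HasDerivAt x (-2 * x t * (3 * x t - y t) * (x t + y t)) t)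
    (hy : ∀ t, HasDerivAt y (2 * y t * (x t - 3 * y t) * (x t + y t)) t) :
    ∀ t, HasDerivAt (fun s => (x s + y s)^2)
        (-2 * (x t + y t)^2 * (6 * (x t)^2 - 4 * x t * y t + 6 * (y t)^2)) t ∧
      -2 * (x t + y t)^2 * (6 * (x t)^2 - 4 * x t * y t + 6 * (y t)^2) ≤ 0 := by
  intro t
  have hsum := (hx t).fun_add (hy t)
  rw [planar_bracket_field_add] at hsum
  refine ⟨?_, mul_nonpos_of_nonpos_of_nonneg ?_ (six_sq_sub_four_mul_add_six_sq_nonneg _ _)⟩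
  · exact (hsum.fun_pow 2).congr_deriv (by push_cast; ring)
  · nlinarith [sq_nonneg (x t + y t)]
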